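/- Let n > ℓ ≥ 1 with gcd(n,ℓ) = 1, and let H = {(n-ℓ)s + nt : s,t ∈ ℤ, t ≥ 0, -ℓt/n ≤ s ≤ (n-ℓ)t/ℓ} (i.e. ns + ℓt ≥ 0 and -ℓs + (n-ℓ)t ≥ 0). Then H is a submonoid of ℕ, and the number of gaps #(ℕ \ H) equals (n^2 - nℓ + ℓ^2 - 1)/2. -/

import Mathlib

/-!
With `F = n s + ℓ t` and `G = -ℓ s + (n - ℓ) t` one has `m = F + G`, and the map
`(s, t) ↦ (F, G)` has determinant `D = n² - nℓ + ℓ²`. As `D` is prime to `ℓ`, its image is cut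
out by the single congruence `ℓ F + n G ≡ 0 (mod D)` (and then `t ≥ 0` is automatic). Substituting
`F = m - G`, this reads `G ≡ c m (mod D)` with `c = -ℓ / (n - ℓ)`, so `m ∈ H` iff the least
residue of `c m` is at most `m`; in particular every gap is below `D`.

Both `c` and `c - 1 = -n / (n - ℓ)` are units mod `D`, so for `0 < m < D` the residue of `c m` is
neither `0` nor `m`, and `m ↦ D - m` exchanges the gaps with the non-gaps in `(0, D)`. Hence there
are `(D - 1) / 2` gaps.
-/

namespace ZMod

theorem natCast_ne_zero_of_pos_of_lt {D m : ℕ} (h0 : 0 < m) (hm : m < D) :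
    (m : ZMod D) ≠ 0 := by
  rw [Ne, natCast_eq_zero_iff]
  exact fun h => absurd (Nat.le_of_dvd h0 h) (by omega)

variable {D : ℕ} {c : ZMod D} {m : ℕ}

theorem val_mul_natCast_ne_zero (hc : IsUnit c) (h0 : 0 < m) (hm : m < D) :
    (c * m).val ≠ 0 := by
  rw [Ne, val_eq_zero, hc.mul_right_eq_zero]
  exact natCast_ne_zero_of_pos_of_lt h0 hm

variable [NeZero D]

theorem val_le_iff_exists_natCast_eq (x : ZMod D) (m : ℕ) :
    x.val ≤ m ↔ ∃ g ≤ m, (g : ZMod D) = x := by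
  refine ⟨fun h => ⟨x.val, h, natCast_zmod_val x⟩, ?_⟩
  rintro ⟨g, hg, rfl⟩
  exact (val_natCast D g ▸ Nat.mod_le g D).trans hg

theorem val_mul_natCast_ne_self (hc : IsUnit (c - 1)) (h0 : 0 < m) (hm : m < D) :
    (c * m).val ≠ m := by
  intro h
  have hcm : c * m = m := by rw [← natCast_zmod_val (c * (m : ZMod D)), h]
  have : (c - 1) * m = 0 := by rw [sub_one_mul, hcm, sub_self]
  exact natCast_ne_zero_of_pos_of_lt h0 hm (hc.mul_right_eq_zero.mp this)

theorem val_mul_natCast_sub (hc : IsUnit c) (h0 : 0 < m) (hm : m < D) :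
    (c * ↑(D - m)).val = D - (c * m).val := by
  have : NeZero (c * m) := ⟨fun h => val_mul_natCast_ne_zero hc h0 hm (h ▸ val_zero)⟩
  rw [Nat.cast_sub hm.le, natCast_self, zero_sub, mul_neg, val_neg_of_ne_zero]

theorem setOf_lt_val_mul_eq (c : ZMod D) :
    {m : ℕ | m < (c * m).val} =
      (((Finset.Ico 1 D).filter fun m : ℕ => m < (c * m).val) : Set ℕ) := by
  ext m
  simp only [Set.mem_ofPred_eq, Finset.coe_filter, Finset.mem_Ico]
  refine ⟨fun h => ⟨⟨?_, h.trans (val_lt _)⟩, h⟩, fun h => h.2⟩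
  rcases Nat.eq_zero_or_pos m with rfl | hm
  · simp at h
  · exact hm

theorem lt_val_mul_natCast_iff_not_lt_sub (hc : IsUnit c) (hc₁ : IsUnit (c - 1)) (h0 : 0 < m)
    (hm : m < D) : m < (c * m).val ↔ ¬ D - m < (c * ↑(D - m)).val := by
  have := val_mul_natCast_ne_self hc₁ h0 hm
  have := val_lt (c * (m : ZMod D))
  rw [val_mul_natCast_sub hc h0 hm]
  omega

theorem ncard_setOf_lt_val_mul (hc : IsUnit c) (hc₁ : IsUnit (c - 1)) :
    {m : ℕ | m < (c * m).val}.ncard = (D - 1) / 2 := by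
  classical
  rw [setOf_lt_val_mul_eq, Set.ncard_coe_finset]
  set S := (Finset.Ico 1 D).filter fun m : ℕ => m < (c * m).val
  set T := (Finset.Ico 1 D).filter fun m : ℕ => ¬ m < (c * m).val
  have hST : S.card + T.card = D - 1 := by
    rw [Finset.card_filter_add_card_filter_not, Nat.card_Ico]
  have hS : S.card = T.card := by
    refine Finset.card_nbij' (D - ·) (D - ·) ?_ ?_ ?_ ?_ <;>
      intro m hm <;> simp only [S, T, Finset.mem_coe, Finset.mem_filter, Finset.mem_Ico] at hm ⊢
    · exact ⟨by omega, (lt_val_mul_natCast_iff_not_lt_sub hc hc₁ (by omega) hm.1.2).mp hm.2⟩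
    · have key := lt_val_mul_natCast_iff_not_lt_sub hc hc₁ (m := D - m) (by omega) (by omega)
      rw [Nat.sub_sub_self hm.1.2.le] at key
      exact ⟨by omega, key.mpr hm.2⟩
    all_goals omega
  omega

end ZMod

section Lattice

variable {R : Type*} [CommRing R]

theorem IsCoprime.sq_sub_mul_add_sq_right {x y : R} (h : IsCoprime x y) :
    IsCoprime (x ^ 2 - x * y + y ^ 2) y := by
  rw [show x ^ 2 - x * y + y ^ 2 = x ^ 2 + y * (y - x) by ring]
  exact IsCoprime.add_mul_left_left_iff.mpr h.pow_left

theorem IsCoprime.sq_sub_mul_add_sq_left {x y : R} (h : IsCoprime x y) :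
    IsCoprime (x ^ 2 - x * y + y ^ 2) x := by
  rw [show x ^ 2 - x * y + y ^ 2 = y ^ 2 + x * (x - y) by ring]
  exact IsCoprime.add_mul_left_left_iff.mpr h.symm.pow_left

theorem IsCoprime.sq_sub_mul_add_sq_sub {x y : R} (h : IsCoprime x y) :
    IsCoprime (x ^ 2 - x * y + y ^ 2) (x - y) := by
  rw [show x ^ 2 - x * y + y ^ 2 = y ^ 2 + (x - y) * x by ring]
  refine IsCoprime.add_mul_left_left_iff.mpr (IsCoprime.pow_left ?_)
  rw [show x - y = x - y * 1 by ring]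
  exact IsCoprime.sub_mul_left_right_iff.mpr h.symm

theorem exists_hurwitz_coords_of_dvd [IsDomain R] {x y F G : R}
    (hD : x ^ 2 - x * y + y ^ 2 ≠ 0) (hcop : IsCoprime (x ^ 2 - x * y + y ^ 2) y)
    (h : x ^ 2 - x * y + y ^ 2 ∣ y * F + x * G) :
    ∃ s t, x * s + y * t = F ∧ -y * s + (x - y) * t = G ∧
      (x ^ 2 - x * y + y ^ 2) * t = y * F + x * G := by
  obtain ⟨t, ht⟩ := h
  have : x ^ 2 - x * y + y ^ 2 ∣ y * ((x - y) * F - y * G) :=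
    ⟨(x - y) * t - G, by linear_combination (x - y) * ht⟩
  obtain ⟨s, hs⟩ := hcop.dvd_of_dvd_mul_left this
  refine ⟨s, t, mul_left_cancel₀ hD ?_, mul_left_cancel₀ hD ?_, ht.symm⟩
  · linear_combination -x * hs - y * ht
  · linear_combination y * hs - (x - y) * ht

end Lattice

def hurwitzSemigroup (n ℓ : ℕ) : Set ℕ :=
  {m : ℕ | ∃ s t : ℤ, 0 ≤ t ∧ 0 ≤ (n : ℤ) * s + (ℓ : ℤ) * t ∧
      0 ≤ -(ℓ : ℤ) * s + ((n : ℤ) - ℓ) * t ∧ (m : ℤ) = ((n : ℤ) - ℓ) * s + n * t}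

def hurwitzDet (n ℓ : ℕ) : ℕ := n ^ 2 - n * ℓ + ℓ ^ 2

noncomputable def hurwitzSlope (n ℓ : ℕ) : ZMod (hurwitzDet n ℓ) :=
  -(ℓ : ZMod (hurwitzDet n ℓ)) * ((n : ZMod (hurwitzDet n ℓ)) - ℓ)⁻¹

theorem zero_mem_hurwitzSemigroup (n ℓ : ℕ) : 0 ∈ hurwitzSemigroup n ℓ :=
  ⟨0, 0, le_rfl, by simp, by simp, by simp⟩

theorem add_mem_hurwitzSemigroup {n ℓ a b : ℕ} (ha : a ∈ hurwitzSemigroup n ℓ)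
    (hb : b ∈ hurwitzSemigroup n ℓ) : a + b ∈ hurwitzSemigroup n ℓ := by
  obtain ⟨s₁, t₁, h₁, h₂, h₃, h₄⟩ := ha
  obtain ⟨s₂, t₂, g₁, g₂, g₃, g₄⟩ := hb
  exact ⟨s₁ + s₂, t₁ + t₂, by linarith, by linarith, by linarith, by push_cast; linarith⟩

variable {n ℓ : ℕ}

theorem natCast_hurwitzDet (h : ℓ ≤ n) :
    (hurwitzDet n ℓ : ℤ) = (n : ℤ) ^ 2 - n * ℓ + ℓ ^ 2 := by
  rw [hurwitzDet, Nat.cast_add, Nat.cast_sub (by rw [sq]; exact Nat.mul_le_mul_left n h)]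
  push_cast
  ring

theorem hurwitzDet_pos (h : ℓ < n) : 0 < hurwitzDet n ℓ := by
  have := natCast_hurwitzDet h.le
  have : (0 : ℤ) < n := by omega
  have : (0 : ℤ) < hurwitzDet n ℓ := by nlinarith
  omega

theorem mem_hurwitzSemigroup_iff_exists_dvd (h : ℓ < n) (hco : n.Coprime ℓ) {m : ℕ} :
    m ∈ hurwitzSemigroup n ℓ ↔ ∃ g ≤ m, (hurwitzDet n ℓ : ℤ) ∣ ℓ * m + (n - ℓ) * g := by
  rw [natCast_hurwitzDet h.le]
  constructor
  · rintro ⟨s, t, ht, hF, hG, hm⟩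
    lift -(ℓ : ℤ) * s + ((n : ℤ) - ℓ) * t to ℕ using hG with g hg
    have hgm : (g : ℤ) ≤ m := by linarith
    exact ⟨g, by exact_mod_cast hgm, t, by linear_combination ℓ * hm + (n - ℓ) * hg⟩
  · rintro ⟨g, hgm, hdvd⟩
    have hD : (0 : ℤ) < n ^ 2 - n * ℓ + ℓ ^ 2 := by
      rw [← natCast_hurwitzDet h.le]; exact_mod_cast hurwitzDet_pos h
    obtain ⟨s, t, hF, hG, ht⟩ := exists_hurwitz_coords_of_dvd (F := ((m - g : ℕ) : ℤ)) (G := g)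
      hD.ne' (Nat.isCoprime_iff_coprime.mpr hco).sq_sub_mul_add_sq_right
      (by rw [show (ℓ : ℤ) * ((m - g : ℕ) : ℤ) + n * g = ℓ * m + (n - ℓ) * g by
        push_cast [hgm]; ring]; exact hdvd)
    refine ⟨s, t, ?_, by rw [hF]; positivity, by rw [hG]; positivity, ?_⟩
    · exact (mul_nonneg_iff_of_pos_left hD).mp (ht ▸ by positivity)
    · push_cast [hgm] at hF
      linear_combination - hF - hG

theorem isUnit_intCast_hurwitzDet (h : ℓ ≤ n) {x : ℤ}
    (hx : IsCoprime ((n : ℤ) ^ 2 - n * ℓ + ℓ ^ 2) x) : IsUnit (x : ZMod (hurwitzDet n ℓ)) :=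
  (ZMod.coe_int_isUnit_iff_isCoprime _ _).mpr (natCast_hurwitzDet h ▸ hx)

theorem hurwitzSlope_mul (h : ℓ ≤ n) (hco : n.Coprime ℓ) :
    hurwitzSlope n ℓ * ((n : ZMod (hurwitzDet n ℓ)) - ℓ) = -ℓ := by
  have hu := isUnit_intCast_hurwitzDet h
    (Nat.isCoprime_iff_coprime.mpr hco).sq_sub_mul_add_sq_sub
  push_cast at hu
  rw [hurwitzSlope, mul_assoc, ZMod.inv_mul_of_unit _ hu, mul_one]

theorem isUnit_hurwitzSlope (h : ℓ ≤ n) (hco : n.Coprime ℓ) : IsUnit (hurwitzSlope n ℓ) := by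
  have hℓ := isUnit_intCast_hurwitzDet h
    (Nat.isCoprime_iff_coprime.mpr hco).sq_sub_mul_add_sq_right
  push_cast at hℓ
  refine isUnit_of_mul_isUnit_left (y := (n : ZMod (hurwitzDet n ℓ)) - ℓ) ?_
  rw [hurwitzSlope_mul h hco]
  exact hℓ.neg

theorem isUnit_hurwitzSlope_sub_one (h : ℓ ≤ n) (hco : n.Coprime ℓ) :
    IsUnit (hurwitzSlope n ℓ - 1) := by
  have hn := isUnit_intCast_hurwitzDet h
    (Nat.isCoprime_iff_coprime.mpr hco).sq_sub_mul_add_sq_left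
  push_cast at hn
  refine isUnit_of_mul_isUnit_left (y := (n : ZMod (hurwitzDet n ℓ)) - ℓ) ?_
  rw [sub_one_mul, hurwitzSlope_mul h hco,
    show -(ℓ : ZMod (hurwitzDet n ℓ)) - (n - ℓ) = -n by ring]
  exact hn.neg

theorem natCast_eq_hurwitzSlope_mul_iff (h : ℓ ≤ n) (hco : n.Coprime ℓ) {g m : ℕ} :
    (g : ZMod (hurwitzDet n ℓ)) = hurwitzSlope n ℓ * m ↔
      (hurwitzDet n ℓ : ℤ) ∣ ℓ * m + (n - ℓ) * g := by
  have hu := isUnit_intCast_hurwitzDet h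
    (Nat.isCoprime_iff_coprime.mpr hco).sq_sub_mul_add_sq_sub
  push_cast at hu
  have hcm : ((n : ZMod (hurwitzDet n ℓ)) - ℓ) * (hurwitzSlope n ℓ * m) = -ℓ * m := by
    linear_combination (m : ZMod (hurwitzDet n ℓ)) * hurwitzSlope_mul h hco
  rw [← ZMod.intCast_zmod_eq_zero_iff_dvd, ← hu.mul_right_inj, hcm]
  push_cast
  rw [add_comm, ← eq_neg_iff_add_eq_zero, neg_mul]

theorem mem_hurwitzSemigroup_iff_val_le (h : ℓ < n) (hco : n.Coprime ℓ) {m : ℕ} :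
    m ∈ hurwitzSemigroup n ℓ ↔ (hurwitzSlope n ℓ * m).val ≤ m := by
  have := NeZero.of_pos (hurwitzDet_pos h)
  rw [mem_hurwitzSemigroup_iff_exists_dvd h hco, ZMod.val_le_iff_exists_natCast_eq]
  exact exists_congr fun _ => and_congr_right fun _ =>
    (natCast_eq_hurwitzSlope_mul_iff h.le hco).symm

theorem stmt16_general (n ℓ : ℕ) (hln : ℓ < n) (hco : Nat.Coprime n ℓ)
    (H : Set ℕ)
    (hH : H = {m : ℕ | ∃ s t : ℤ, 0 ≤ t ∧ 0 ≤ (n : ℤ) * s + (ℓ : ℤ) * t ∧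
      0 ≤ -(ℓ : ℤ) * s + ((n : ℤ) - ℓ) * t ∧ (m : ℤ) = ((n : ℤ) - ℓ) * s + n * t}) :
    (0 ∈ H) ∧ (∀ a ∈ H, ∀ b ∈ H, a + b ∈ H) ∧
    {m : ℕ | m ∉ H}.ncard = (n ^ 2 - n * ℓ + ℓ ^ 2 - 1) / 2 := by
  obtain rfl : H = hurwitzSemigroup n ℓ := hH
  refine ⟨zero_mem_hurwitzSemigroup n ℓ, fun a ha b hb => add_mem_hurwitzSemigroup ha hb, ?_⟩
  have := NeZero.of_pos (hurwitzDet_pos hln)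
  have hgaps : {m | m ∉ hurwitzSemigroup n ℓ} = {m : ℕ | m < (hurwitzSlope n ℓ * m).val} := by
    ext m
    simp [mem_hurwitzSemigroup_iff_val_le hln hco]
  rw [hgaps, ZMod.ncard_setOf_lt_val_mul (isUnit_hurwitzSlope hln.le hco)
    (isUnit_hurwitzSlope_sub_one hln.le hco)]
  rfl

/-- For coprime `n > ℓ ≥ 1`, the set
`H = {(n-ℓ)s + nt : s,t ∈ ℤ, t ≥ 0, ns + ℓt ≥ 0, -ℓs + (n-ℓ)t ≥ 0}`
is a submonoid of `ℕ` whose number of gaps is `(n^2 - nℓ + ℓ^2 - 1)/2`. -/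
theorem stmt16 (n ℓ : ℕ) (hl : 1 ≤ ℓ) (hln : ℓ < n) (hco : Nat.Coprime n ℓ)
    (H : Set ℕ)
    (hH : H = {m : ℕ | ∃ s t : ℤ, 0 ≤ t ∧ 0 ≤ (n : ℤ) * s + (ℓ : ℤ) * t ∧
      0 ≤ -(ℓ : ℤ) * s + ((n : ℤ) - ℓ) * t ∧ (m : ℤ) = ((n : ℤ) - ℓ) * s + n * t}) :
    (0 ∈ H) ∧ (∀ a ∈ H, ∀ b ∈ H, a + b ∈ H) ∧
    {m : ℕ | m ∉ H}.ncard = (n ^ 2 - n * ℓ + ℓ ^ 2 - 1) / 2 :=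
  stmt16_general n ℓ hln hco H hH
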